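/- arXiv:1411.0908 — 2 statements merged into one kernel-verified Lean document; each statement's English description precedes it below -/
import Mathlib

section
/- Let X be a Tychonoff (completely regular Hausdorff) space, let βX be its Stone–Čech compactification (with X identified with its image), and let υX = ⋂{C : C is a cozero-set of βX containing X}. Then X is locally pseudocompact (every point of X has an open neighborhood in X with pseudocompact closure) if and only if cl_{βX}(βX \ υX) ⊆ βX \ X, i.e., cl_{βX}(βX \ υX) is disjoint from (the image of) X. -/
/-!
A point `x` of `X` avoids `cl (βX \ υX)` exactly when `υX` is a neighbourhood of `x` in `βX`.
If `cl U` is a pseudocompact neighbourhood of `x`, every continuous `g` on `βX` that does not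
vanish on `X` is bounded away from `0` on `cl U`, hence on `cl_{βX} (cl U)`, which is therefore
a neighbourhood of `x` inside `υX`. Conversely, if a closed neighbourhood `C` of `x` lies in
`υX`, every continuous `u : X → ℝ` is bounded on `U = X ∩ int C`, because the extension of
`1 / (1 + |u|)` to `βX` is positive on the compact set `C`. A continuous function unbounded on
`cl U` would, via a locally finite family of open subsets of `U` and bump functions, produce
such a `u` unbounded on `U`.
-/

open Set Topology

/-- An ideal in a set `X`: a nonempty collection of subsets of `X`, downward closed
and closed under finite unions. -/
def IsSetIdeal {X : Type*} (H : Set (Set X)) : Prop :=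
  H.Nonempty ∧ (∀ A B : Set X, A ⊆ B → B ∈ H → A ∈ H) ∧
    (∀ A B : Set X, A ∈ H → B ∈ H → A ∪ B ∈ H)

/-- A continuous map `f : X → [0,1]` is 2-valued modulo an ideal `H` if `f⁻¹(0) ∉ H`,
`f⁻¹(1) ∉ H`, and `X \ (f⁻¹(0) ∪ f⁻¹(1)) ∈ H`. -/
def TwoValuedMod {X : Type*} [TopologicalSpace X] (H : Set (Set X)) (f : X → ℝ) : Prop :=
  Continuous f ∧ (∀ x, f x ∈ Set.Icc (0 : ℝ) 1) ∧
    f ⁻¹' {0} ∉ H ∧ f ⁻¹' {1} ∉ H ∧ (f ⁻¹' {0} ∪ f ⁻¹' {1})ᶜ ∈ H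

/-- `X` is connected modulo the ideal `H` if there is no continuous `f : X → [0,1]`
that is 2-valued modulo `H`. -/
def ConnectedMod (X : Type*) [TopologicalSpace X] (H : Set (Set X)) : Prop :=
  ¬ ∃ f : X → ℝ, TwoValuedMod H f

/-- A subset `S` of `X` is pseudocompact if every continuous real-valued function on the
subspace `S` is bounded. -/
def IsPseudocompactSet {X : Type*} [TopologicalSpace X] (S : Set X) : Prop :=
  ∀ f : ↥S → ℝ, Continuous f → ∃ M : ℝ, ∀ y : ↥S, |f y| ≤ M

/-- The Hewitt realcompactification `υX` of `X` inside `βX`: the intersection of all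
cozero-sets of `βX` containing the image of `X`. -/
def upsilonSet (X : Type*) [TopologicalSpace X] : Set (StoneCech X) :=
  ⋂₀ {C : Set (StoneCech X) |
    (∃ g : StoneCech X → ℝ, Continuous g ∧ C = {p | g p ≠ 0}) ∧
      Set.range (stoneCechUnit : X → StoneCech X) ⊆ C}

section

variable {X : Type*} [TopologicalSpace X]

theorem mem_upsilonSet_iff {q : StoneCech X} :
    q ∈ upsilonSet X ↔ ∀ g : StoneCech X → ℝ, Continuous g →
      (∀ x, g (stoneCechUnit x) ≠ 0) → g q ≠ 0 := by
  simp only [upsilonSet, mem_sInter, mem_ofPred_eq, range_subset_iff]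
  constructor
  · intro h g hg hX
    exact h _ ⟨⟨g, hg, rfl⟩, hX⟩
  · rintro h _ ⟨⟨g, hg, rfl⟩, hX⟩
    exact h g hg hX

theorem exists_stoneCech_extension_of_mapsTo_Icc {f : X → ℝ} (hf : Continuous f) {a b : ℝ}
    (hab : ∀ x, f x ∈ Icc a b) :
    ∃ G : StoneCech X → ℝ, Continuous G ∧ ∀ x, G (stoneCechUnit x) = f x :=
  have hf' : Continuous (codRestrict f (Icc a b) hab) := hf.codRestrict hab
  ⟨Subtype.val ∘ stoneCechExtend hf',
    continuous_subtype_val.comp (continuous_stoneCechExtend hf'),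
    fun x => congrArg Subtype.val (stoneCechExtend_stoneCechUnit hf' x)⟩

theorem IsPseudocompactSet.exists_pos_le_abs {S : Set X} (hS : IsPseudocompactSet S)
    {g : X → ℝ} (hg : Continuous g) (hg0 : ∀ x ∈ S, g x ≠ 0) :
    ∃ ε > 0, ∀ x ∈ S, ε ≤ |g x| := by
  obtain ⟨M, hM⟩ := hS (fun y => |g y|⁻¹)
    ((hg.comp continuous_subtype_val).abs.inv₀ fun y => abs_ne_zero.2 (hg0 y y.2))
  refine ⟨(max M 1)⁻¹, by positivity, fun x hx => ?_⟩
  have hgx : |g x|⁻¹ ≤ max M 1 :=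
    (le_abs_self _).trans ((hM ⟨x, hx⟩).trans (le_max_left _ _))
  exact (inv_le_comm₀ (abs_pos.2 (hg0 x hx)) (by positivity)).1 hgx

theorem closure_image_subset_upsilonSet {S : Set X} (hS : IsPseudocompactSet S) :
    closure (stoneCechUnit '' S) ⊆ upsilonSet X := by
  intro q hq
  refine mem_upsilonSet_iff.2 fun g hg hX => ?_
  obtain ⟨ε, hε, hεS⟩ :=
    hS.exists_pos_le_abs (hg.comp continuous_stoneCechUnit) fun x _ => hX x
  have hcl : closure (stoneCechUnit '' S) ⊆ {p | ε ≤ |g p|} :=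
    closure_minimal (image_subset_iff.2 hεS) (isClosed_le continuous_const hg.abs)
  exact abs_pos.1 (hε.trans_le (hcl hq))

theorem exists_bound_of_closure_image_subset_upsilonSet {A : Set X}
    (hA : closure (stoneCechUnit '' A) ⊆ upsilonSet X) {u : X → ℝ} (hu : Continuous u) :
    ∃ M, ∀ x ∈ A, |u x| ≤ M := by
  have hpos : ∀ x, 0 < (1 + |u x|)⁻¹ := fun x => by positivity
  obtain ⟨G, hG, hGu⟩ := exists_stoneCech_extension_of_mapsTo_Icc
    ((continuous_const.add hu.abs).inv₀ fun x => (by positivity : (0 : ℝ) < 1 + |u x|).ne')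
    fun x => ⟨(hpos x).le, inv_le_one_of_one_le₀ (le_add_of_nonneg_right (abs_nonneg _))⟩
  have hGX : ∀ x, G (stoneCechUnit x) ≠ 0 := fun x => (hGu x).symm ▸ (hpos x).ne'
  obtain ⟨ε, hε, hεK⟩ := isClosed_closure.isCompact.exists_forall_le' hG.abs.continuousOn
    fun q hq => abs_pos.2 (mem_upsilonSet_iff.1 (hA hq) G hG hGX)
  refine ⟨ε⁻¹, fun x hx => ?_⟩
  have hεx : ε ≤ (1 + |u x|)⁻¹ := by
    simpa [hGu, abs_of_pos (hpos x)] using hεK _ (subset_closure (mem_image_of_mem _ hx))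
  linarith [(le_inv_comm₀ hε (by positivity)).1 hεx]

theorem locallyFinite_Ioi_natCast : LocallyFinite fun n : ℕ => Ioi (n : ℝ) := by
  intro x
  refine ⟨Iio (x + 1), Iio_mem_nhds (lt_add_one x), (finite_lt_nat ⌈x + 1⌉₊).subset ?_⟩
  rintro n ⟨y, hny, hyx⟩
  exact Nat.lt_ceil.2 ((mem_Ioi.1 hny).trans (mem_Iio.1 hyx))

theorem IsClosed.locallyFinite_of_subtype {ι : Type*} {S : Set X} (hS : IsClosed S)
    {V : ι → Set X} (hVS : ∀ i, V i ⊆ S) (hV : LocallyFinite fun i => ((↑) : S → X) ⁻¹' V i) :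
    LocallyFinite V := by
  intro x
  by_cases hx : x ∈ S
  · obtain ⟨t, ht, hfin⟩ := hV ⟨x, hx⟩
    obtain ⟨t', ht', hsub⟩ := (mem_nhds_subtype S _ t).1 ht
    refine ⟨t', ht', hfin.subset ?_⟩
    rintro i ⟨y, hyV, hyt⟩
    exact ⟨⟨y, hVS i hyV⟩, hyV, hsub hyt⟩
  · refine ⟨Sᶜ, hS.isOpen_compl.mem_nhds hx, finite_empty.subset ?_⟩
    rintro i ⟨y, hyV, hyS⟩
    exact hyS (hVS i hyV)

theorem IsOpen.exists_locallyFinite_of_unbounded_on_closure {U : Set X} (hU : IsOpen U)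
    {f : closure U → ℝ} (hf : Continuous f) (hunb : ∀ M, ∃ y, M < |f y|) :
    ∃ (V : ℕ → Set X) (p : ℕ → X), LocallyFinite V ∧ (∀ n, IsOpen (V n)) ∧
      (∀ n, V n ⊆ U) ∧ ∀ n, p n ∈ V n := by
  have hW : ∀ n : ℕ, ∃ W : Set X, IsOpen W ∧ (↑) ⁻¹' W = (fun y => |f y|) ⁻¹' Ioi (n : ℝ) :=
    fun n => isOpen_induced_iff.1 (isOpen_Ioi.preimage hf.abs)
  choose W hWo hWf using hW
  have hWU : ∀ n, (W n ∩ U).Nonempty := fun n => by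
    obtain ⟨y, hy⟩ := hunb n
    have hyW : y ∈ ((↑) ⁻¹' W n : Set (closure U)) := by rw [hWf]; exact hy
    exact mem_closure_iff.1 y.2 _ (hWo n) hyW
  choose p hp using hWU
  refine ⟨fun n => W n ∩ U, p, ?_, fun n => (hWo n).inter hU, fun n => inter_subset_right, hp⟩
  refine isClosed_closure.locallyFinite_of_subtype
    (fun n => inter_subset_right.trans subset_closure) ?_
  refine (locallyFinite_Ioi_natCast.preimage_continuous hf.abs).subset fun n => ?_
  rw [← hWf]
  exact preimage_mono inter_subset_left

theorem LocallyFinite.exists_continuous_natCast_le [CompletelyRegularSpace X] {V : ℕ → Set X}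
    (hV : LocallyFinite V) (hVo : ∀ n, IsOpen (V n)) {p : ℕ → X} (hp : ∀ n, p n ∈ V n) :
    ∃ u : X → ℝ, Continuous u ∧ ∀ n : ℕ, (n : ℝ) ≤ u (p n) := by
  choose g hg hgp hgV using fun n =>
    CompletelyRegularSpace.completely_regular_isOpen (p n) (V n) (hVo n) (hp n)
  set k : ℕ → X → ℝ := fun n x => n * (1 - g n x)
  have hk : ∀ n, Continuous (k n) := fun n => by fun_prop
  have hk0 : ∀ n x, 0 ≤ k n x := fun n x =>
    mul_nonneg n.cast_nonneg (sub_nonneg.2 (g n x).2.2)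
  have hksupp : ∀ n, Function.support (k n) ⊆ V n := fun n x hx => by
    by_contra hxV
    exact hx (by simp [k, hgV n hxV])
  refine ⟨fun x => ∑ᶠ n, k n x, continuous_finsum hk (hV.subset hksupp), fun n => ?_⟩
  have hkn : k n (p n) = n := by simp [k, hgp n]
  exact hkn ▸ single_le_finsum n ((hV.point_finite (p n)).subset fun m hm => hksupp m hm)
    fun m => hk0 m (p n)

theorem IsOpen.isPseudocompactSet_closure [CompletelyRegularSpace X] {U : Set X}
    (hU : IsOpen U)
    (hbdd : ∀ u : X → ℝ, Continuous u → ∃ M, ∀ x ∈ U, |u x| ≤ M) :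
    IsPseudocompactSet (closure U) := by
  intro f hf
  by_contra! hunb
  obtain ⟨V, p, hV, hVo, hVU, hp⟩ := hU.exists_locallyFinite_of_unbounded_on_closure hf hunb
  obtain ⟨u, hu, hup⟩ := hV.exists_continuous_natCast_le hVo hp
  obtain ⟨M, hM⟩ := hbdd u hu
  obtain ⟨n, hn⟩ := exists_nat_gt M
  linarith [hup n, le_abs_self (u (p n)), hM (p n) (hVU n (hp n))]

theorem stoneCechUnit_mem_interior_upsilonSet_iff [CompletelyRegularSpace X] (x : X) :
    stoneCechUnit x ∈ interior (upsilonSet X) ↔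
      ∃ U : Set X, IsOpen U ∧ x ∈ U ∧ IsPseudocompactSet (closure U) := by
  rw [mem_interior_iff_mem_nhds]
  constructor
  · intro h
    obtain ⟨C, hC, hCc, hCυ⟩ := exists_mem_nhds_isClosed_subset h
    have hUo : IsOpen (stoneCechUnit ⁻¹' interior C) :=
      isOpen_interior.preimage continuous_stoneCechUnit
    have hUυ : closure (stoneCechUnit '' (stoneCechUnit ⁻¹' interior C)) ⊆ upsilonSet X :=
      (closure_minimal ((image_preimage_subset _ _).trans interior_subset) hCc).trans hCυ
    exact ⟨_, hUo, mem_interior_iff_mem_nhds.2 hC, hUo.isPseudocompactSet_closure fun u hu =>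
      exists_bound_of_closure_image_subset_upsilonSet hUυ hu⟩
  · rintro ⟨U, hU, hxU, hpc⟩
    have hcl : closure U ∈ 𝓝 x := Filter.mem_of_superset (hU.mem_nhds hxU) subset_closure
    exact Filter.mem_of_superset (isDenseInducing_stoneCechUnit.closure_image_mem_nhds hcl)
      (closure_image_subset_upsilonSet hpc)

end

/-- A Tychonoff space `X` is locally pseudocompact iff `cl_{βX}(βX \ υX) ⊆ βX \ X`. -/
theorem locallyPseudocompact_iff {X : Type*} [TopologicalSpace X] [T35Space X] :
    (∀ x : X, ∃ U : Set X, IsOpen U ∧ x ∈ U ∧ IsPseudocompactSet (closure U)) ↔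
      closure ((upsilonSet X)ᶜ) ⊆ (Set.range (stoneCechUnit : X → StoneCech X))ᶜ := by
  rw [closure_compl, compl_subset_compl, range_subset_iff]
  exact forall_congr' fun x => (stoneCechUnit_mem_interior_upsilonSet_iff x).symm
end

section
/- Let X be a normal Tychonoff space such that X = X₁ ∪ ⋯ ∪ Xₙ, where each Xᵢ is a closed subspace of X which is connected modulo pseudocompactness (i.e., connected modulo the ideal 𝓤_{Xᵢ} in Xᵢ generated by the open subsets of Xᵢ with pseudocompact closure in Xᵢ). If X₁ ∩ ⋯ ∩ Xₙ is not pseudocompact, then X is connected modulo pseudocompactness (connected modulo 𝓤_X). -/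
open Set Topology

/-- The ideal generated by a collection `𝓐` of subsets of `X`: all subsets of finite
unions of members of `𝓐`. -/
def GenIdeal {X : Type*} (𝓐 : Set (Set X)) : Set (Set X) :=
  {S | ∃ 𝓑 : Set (Set X), 𝓑 ⊆ 𝓐 ∧ 𝓑.Finite ∧ S ⊆ ⋃₀ 𝓑}

/-!
Suppose `f : X → [0,1]` is 2-valued modulo `𝓤_X`, with zero set `Z`, one set `O` and middle part
inside a pseudocompact set `K`. In a normal space closed subsets of pseudocompact sets are
pseudocompact (Tietze), so on each closed piece `Xᵢ` the middle part of `f` lies in `𝓤_{Xᵢ}` and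
connectedness of `Xᵢ` forces `Z ∩ Xᵢ` or `O ∩ Xᵢ` to be pseudocompact. If `Z ∩ Xᵢ` and `O ∩ Xⱼ`
both are, the closed set `⋂ Xₖ ⊆ (Z ∩ Xᵢ) ∪ (O ∩ Xⱼ) ∪ K` is pseudocompact. Otherwise, say, every
`Z ∩ Xᵢ` is, hence so is `Z`; then a neighbourhood `f ⁻¹' (-r, r)` of `Z` has its closure inside
`Z ∪ K`, which puts `Z` in `𝓤_X`.
-/

open Set Topology

section GenIdeal

variable {X Y : Type*}

theorem GenIdeal.of_subset {𝓐 : Set (Set X)} {A S : Set X} (hA : A ∈ 𝓐) (hS : S ⊆ A) :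
    S ∈ GenIdeal 𝓐 :=
  ⟨{A}, singleton_subset_iff.2 hA, finite_singleton A, by simpa using hS⟩

theorem GenIdeal.preimage {𝓐 : Set (Set Y)} {𝓐' : Set (Set X)} {φ : X → Y}
    (h : ∀ B ∈ 𝓐, φ ⁻¹' B ∈ 𝓐') {S : Set Y} (hS : S ∈ GenIdeal 𝓐) :
    φ ⁻¹' S ∈ GenIdeal 𝓐' := by
  obtain ⟨𝓑, h𝓑, hfin, hS⟩ := hS
  refine ⟨(φ ⁻¹' ·) '' 𝓑, by rintro _ ⟨B, hB, rfl⟩; exact h B (h𝓑 hB), hfin.image _, ?_⟩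
  rw [sUnion_image]
  exact (preimage_mono hS).trans (by rw [preimage_sUnion])

end GenIdeal

section Pseudocompact

variable {X Y : Type*} [TopologicalSpace X] [TopologicalSpace Y]

/-- The ideal `𝓤_X`. -/
abbrev pseudocompactIdeal (X : Type*) [TopologicalSpace X] : Set (Set X) :=
  GenIdeal {U : Set X | IsOpen U ∧ IsPseudocompactSet (closure U)}

theorem isPseudocompactSet_of_homeomorph {s : Set X} {t : Set Y} (e : s ≃ₜ t)
    (hs : IsPseudocompactSet s) : IsPseudocompactSet t := by
  intro f hf
  obtain ⟨M, hM⟩ := hs (f ∘ e) (hf.comp e.continuous)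
  exact ⟨M, fun y => by simpa using hM (e.symm y)⟩

theorem Topology.IsEmbedding.isPseudocompactSet_image_iff {f : X → Y} (hf : IsEmbedding f)
    {s : Set X} : IsPseudocompactSet (f '' s) ↔ IsPseudocompactSet s :=
  ⟨isPseudocompactSet_of_homeomorph (hf.homeomorphImage s).symm,
    isPseudocompactSet_of_homeomorph (hf.homeomorphImage s)⟩

theorem IsPseudocompactSet.of_isClosed_subset [NormalSpace X] {F K : Set X}
    (hK : IsPseudocompactSet K) (hF : IsClosed F) (hFK : F ⊆ K) : IsPseudocompactSet F := by
  intro g hg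
  obtain ⟨G, hG⟩ := ContinuousMap.exists_restrict_eq hF ⟨g, hg⟩
  obtain ⟨M, hM⟩ := hK (fun y => G y) (by fun_prop)
  refine ⟨M, fun y => ?_⟩
  have hGy : G y = g y := congrFun (congrArg DFunLike.coe hG) y
  exact hGy ▸ hM ⟨y, hFK y.2⟩

theorem isPseudocompactSet_empty : IsPseudocompactSet (∅ : Set X) :=
  fun _ _ => ⟨0, fun y => absurd y.2 (notMem_empty _)⟩

theorem IsPseudocompactSet.union {A B : Set X} (hA : IsPseudocompactSet A)
    (hB : IsPseudocompactSet B) : IsPseudocompactSet (A ∪ B) := by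
  intro g hg
  obtain ⟨M₁, hM₁⟩ := hA (fun y => g ⟨y, Or.inl y.2⟩) (by fun_prop)
  obtain ⟨M₂, hM₂⟩ := hB (fun y => g ⟨y, Or.inr y.2⟩) (by fun_prop)
  refine ⟨max M₁ M₂, fun ⟨y, hy⟩ => ?_⟩
  rcases hy with hy | hy
  · exact (hM₁ ⟨y, hy⟩).trans (le_max_left _ _)
  · exact (hM₂ ⟨y, hy⟩).trans (le_max_right _ _)

theorem isPseudocompactSet_sUnion {𝓒 : Set (Set X)} (hfin : 𝓒.Finite)
    (h : ∀ C ∈ 𝓒, IsPseudocompactSet C) : IsPseudocompactSet (⋃₀ 𝓒) := by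
  induction 𝓒, hfin using Set.Finite.induction_on with
  | empty => simpa using isPseudocompactSet_empty
  | @insert C 𝓒 _ _ ih =>
    rw [sUnion_insert]
    exact (h C (mem_insert _ _)).union (ih fun D hD => h D (mem_insert_of_mem _ hD))

theorem isPseudocompactSet_iUnion {ι : Type*} [Finite ι] {s : ι → Set X}
    (h : ∀ i, IsPseudocompactSet (s i)) : IsPseudocompactSet (⋃ i, s i) := by
  rw [← sUnion_range]
  exact isPseudocompactSet_sUnion (finite_range s) (by rintro _ ⟨i, rfl⟩; exact h i)

theorem exists_isPseudocompactSet_superset {S : Set X} (hS : S ∈ pseudocompactIdeal X) :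
    ∃ K, IsPseudocompactSet K ∧ S ⊆ K := by
  obtain ⟨𝓑, h𝓑, hfin, hS⟩ := hS
  refine ⟨⋃₀ (closure '' 𝓑), isPseudocompactSet_sUnion (hfin.image _) ?_,
    hS.trans (sUnion_mono_subsets fun _ => subset_closure)⟩
  rintro _ ⟨B, hB, rfl⟩
  exact (h𝓑 hB).2

theorem IsClosed.isPseudocompactSet_of_mem_pseudocompactIdeal [NormalSpace X] {F : Set X}
    (hF : IsClosed F) (hmem : F ∈ pseudocompactIdeal X) : IsPseudocompactSet F := by
  obtain ⟨K, hK, hFK⟩ := exists_isPseudocompactSet_superset hmem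
  exact hK.of_isClosed_subset hF hFK

theorem IsClosed.preimage_subtypeVal_mem_pseudocompactIdeal [NormalSpace X] {C : Set X}
    (hC : IsClosed C) {S : Set X} (hS : S ∈ pseudocompactIdeal X) :
    ((↑) : C → X) ⁻¹' S ∈ pseudocompactIdeal C := by
  refine GenIdeal.preimage ?_ hS
  rintro B ⟨hBo, hB⟩
  refine ⟨hBo.preimage continuous_subtype_val, ?_⟩
  have hemb := hC.isClosedEmbedding_subtypeVal
  rw [← hemb.isEmbedding.isPseudocompactSet_image_iff]
  refine hB.of_isClosed_subset (hemb.isClosedMap _ isClosed_closure) ?_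
  exact (image_closure_subset_closure_image continuous_subtype_val).trans
    (closure_mono (image_preimage_subset _ _))

theorem preimage_singleton_mem_pseudocompactIdeal [NormalSpace X] {f : X → ℝ}
    (hf : Continuous f) {a b : ℝ} (hab : a ≠ b) (ha : IsPseudocompactSet (f ⁻¹' {a}))
    (hM : (f ⁻¹' {a} ∪ f ⁻¹' {b})ᶜ ∈ pseudocompactIdeal X) :
    f ⁻¹' {a} ∈ pseudocompactIdeal X := by
  obtain ⟨K, hK, hMK⟩ := exists_isPseudocompactSet_superset hM
  have hab' : 0 < dist a b := dist_pos.2 hab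
  set r := dist a b / 2
  have hr : 0 < r := half_pos hab'
  have hb : b ∉ Metric.closedBall a r := by
    rw [Metric.mem_closedBall, dist_comm, not_le]; exact half_lt_self hab'
  have hclosure : closure (f ⁻¹' Metric.ball a r) ⊆ f ⁻¹' Metric.closedBall a r :=
    closure_minimal (preimage_mono Metric.ball_subset_closedBall)
      (Metric.isClosed_closedBall.preimage hf)
  have hsub : f ⁻¹' Metric.closedBall a r ⊆ f ⁻¹' {a} ∪ K := by
    intro x hx
    by_cases hxa : f x = a
    · exact Or.inl hxa
    · exact Or.inr (hMK fun h => h.elim hxa fun hxb => hb (hxb ▸ hx))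
  refine GenIdeal.of_subset ⟨Metric.isOpen_ball.preimage hf, ?_⟩
    (preimage_mono (singleton_subset_iff.2 (Metric.mem_ball_self hr)))
  exact (ha.union hK).of_isClosed_subset isClosed_closure (hclosure.trans hsub)

theorem ConnectedMod.isPseudocompactSet_preimage_zero_or_one [NormalSpace X]
    (hX : ConnectedMod X (pseudocompactIdeal X)) {f : X → ℝ} (hf : Continuous f)
    (hf01 : ∀ x, f x ∈ Icc (0 : ℝ) 1)
    (hM : (f ⁻¹' {0} ∪ f ⁻¹' {1})ᶜ ∈ pseudocompactIdeal X) :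
    IsPseudocompactSet (f ⁻¹' {0}) ∨ IsPseudocompactSet (f ⁻¹' {1}) := by
  by_contra! h
  refine hX ⟨f, hf, hf01, fun h0 => h.1 ?_, fun h1 => h.2 ?_, hM⟩
  · exact (isClosed_singleton.preimage hf).isPseudocompactSet_of_mem_pseudocompactIdeal h0
  · exact (isClosed_singleton.preimage hf).isPseudocompactSet_of_mem_pseudocompactIdeal h1

theorem IsClosed.isPseudocompactSet_inter_preimage_zero_or_one [NormalSpace X] {C : Set X}
    (hC : IsClosed C) (hconn : ConnectedMod C (pseudocompactIdeal C)) {f : X → ℝ}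
    (hf : Continuous f) (hf01 : ∀ x, f x ∈ Icc (0 : ℝ) 1)
    (hM : (f ⁻¹' {0} ∪ f ⁻¹' {1})ᶜ ∈ pseudocompactIdeal X) :
    IsPseudocompactSet (C ∩ f ⁻¹' {0}) ∨ IsPseudocompactSet (C ∩ f ⁻¹' {1}) := by
  have hemb := hC.isClosedEmbedding_subtypeVal
  have : NormalSpace C := hemb.normalSpace
  simp only [← Subtype.image_preimage_coe, hemb.isEmbedding.isPseudocompactSet_image_iff]
  exact hconn.isPseudocompactSet_preimage_zero_or_one (f := f ∘ (↑)) (by fun_prop)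
    (fun x => hf01 x) (hC.preimage_subtypeVal_mem_pseudocompactIdeal hM)

end Pseudocompact

theorem connectedMod_pseudocompact_of_finite_union_general {X : Type*} [TopologicalSpace X]
    [NormalSpace X]
    (n : ℕ) (Xs : Fin n → Set X)
    (hcl : ∀ i, IsClosed (Xs i))
    (hcover : ⋃ i, Xs i = Set.univ)
    (hconn : ∀ i, ConnectedMod ↥(Xs i)
      (GenIdeal {U : Set ↥(Xs i) | IsOpen U ∧ IsPseudocompactSet (closure U)}))
    (hnp : ¬ IsPseudocompactSet (⋂ i, Xs i)) :
    ConnectedMod X (GenIdeal {U : Set X | IsOpen U ∧ IsPseudocompactSet (closure U)}) := by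
  rintro ⟨f, hf, hf01, hZ, hO, hM⟩
  have key i := (hcl i).isPseudocompactSet_inter_preimage_zero_or_one (hconn i) hf hf01 hM
  have hlevel (a : ℝ) (h : ∀ i, IsPseudocompactSet (Xs i ∩ f ⁻¹' {a})) :
      IsPseudocompactSet (f ⁻¹' {a}) := by
    simpa [← iUnion_inter, hcover] using isPseudocompactSet_iUnion h
  by_cases hall0 : ∀ i, IsPseudocompactSet (Xs i ∩ f ⁻¹' {0})
  · exact hZ (preimage_singleton_mem_pseudocompactIdeal hf zero_ne_one (hlevel 0 hall0) hM)
  by_cases hall1 : ∀ i, IsPseudocompactSet (Xs i ∩ f ⁻¹' {1})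
  · refine hO (preimage_singleton_mem_pseudocompactIdeal hf one_ne_zero (hlevel 1 hall1) ?_)
    rwa [union_comm]
  push Not at hall0 hall1
  obtain ⟨i, hi⟩ := hall1
  obtain ⟨j, hj⟩ := hall0
  obtain ⟨K, hK, hMK⟩ := exists_isPseudocompactSet_superset hM
  refine hnp ((((key i).resolve_right hi).union ((key j).resolve_left hj)).union hK
    |>.of_isClosed_subset (isClosed_iInter hcl) fun x hx => ?_)
  have hx k : x ∈ Xs k := mem_iInter.1 hx k
  by_cases hx0 : f x = 0
  · exact Or.inl (Or.inl ⟨hx i, hx0⟩)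
  by_cases hx1 : f x = 1
  · exact Or.inl (Or.inr ⟨hx j, hx1⟩)
  exact Or.inr (hMK fun h => h.elim hx0 hx1)

/-- If a normal Tychonoff space `X` is `X₁ ∪ ⋯ ∪ Xₙ` with each `Xᵢ` a closed subspace
connected modulo pseudocompactness (modulo the ideal in `Xᵢ` generated by the open
subsets of `Xᵢ` with pseudocompact closure), and `X₁ ∩ ⋯ ∩ Xₙ` is not pseudocompact,
then `X` is connected modulo pseudocompactness. -/
theorem connectedMod_pseudocompact_of_finite_union {X : Type*} [TopologicalSpace X]
    [NormalSpace X] [T35Space X]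
    (n : ℕ) (hn : 0 < n) (Xs : Fin n → Set X)
    (hcl : ∀ i, IsClosed (Xs i))
    (hcover : ⋃ i, Xs i = Set.univ)
    (hconn : ∀ i, ConnectedMod ↥(Xs i)
      (GenIdeal {U : Set ↥(Xs i) | IsOpen U ∧ IsPseudocompactSet (closure U)}))
    (hnp : ¬ IsPseudocompactSet (⋂ i, Xs i)) :
    ConnectedMod X (GenIdeal {U : Set X | IsOpen U ∧ IsPseudocompactSet (closure U)}) :=
  connectedMod_pseudocompact_of_finite_union_general n Xs hcl hcover hconn hnp
end
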